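/- Let X be a real-valued random variable with law P, an atomless (continuous) distribution on ℝ with CDF F. The simplicial depth random variable SD(X;P) = 2F(X)(1−F(X)) first-order stochastically dominates the halfspace depth random variable HD(X;P) = min{F(X), 1−F(X)}: for every z ∈ [0, 1/2], the CDF of SD(X;P) at z, namely 1 − √(1 − 2z), is at most the CDF of HD(X;P) at z, namely 2z; moreover equality 1 − √(1 − 2z) = 2z holds only at z = 0 and z = 1/2. -/

import Mathlib

/-!
By continuity of `F`, the probability integral transform makes `F X` uniform on `[0, 1]`. Both
depths are functions of `F X` whose sublevel sets `{u | depth u ≤ z}` are complements of open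
intervals centred at `1/2`, of length `√(1 - 2z)` for simplicial and `1 - 2z` for halfspace depth;
hence the two CDFs are `1 - √(1 - 2z)` and `2z`, and their comparison is `x ≤ √x` on `[0, 1]`
(with `x = 1 - 2z`), an equality only at `x = 0` and `x = 1`.
-/

open MeasureTheory ProbabilityTheory Set

lemma measureReal_restrict_Icc_compl_Ioo {a b : ℝ} (ha : 0 ≤ a) (hab : a ≤ b) (hb : b ≤ 1) :
    (volume.restrict (Icc (0 : ℝ) 1)).real (Ioo a b)ᶜ = 1 - (b - a) := by
  rw [measureReal_compl measurableSet_Ioo, measureReal_restrict_apply_univ,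
    measureReal_restrict_apply measurableSet_Ioo,
    inter_eq_left.2 (Ioo_subset_Icc_self.trans (Icc_subset_Icc ha hb)),
    Real.volume_real_Icc_of_le zero_le_one, Real.volume_real_Ioo_of_le hab, sub_zero]

section ProbabilityIntegralTransform

variable (P : Measure ℝ) [IsProbabilityMeasure P] [NullSingletonClass P]

lemma leftLim_cdf (x : ℝ) : Function.leftLim (cdf P) x = cdf P x := by
  have h := (cdf P).measure_singleton x
  rw [measure_cdf, measure_singleton, eq_comm, ENNReal.ofReal_eq_zero, sub_nonpos] at h
  exact le_antisymm ((monotone_cdf P).leftLim_le le_rfl) h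

lemma continuous_cdf : Continuous (cdf P) := by
  refine continuous_iff_continuousAt.2 fun x =>
    continuousAt_iff_continuous_left_right.2 ⟨?_, (cdf P).right_continuous x⟩
  rw [← continuousWithinAt_Iio_iff_Iic, (monotone_cdf P).continuousWithinAt_Iio_iff_leftLim_eq]
  exact leftLim_cdf P x

lemma measure_cdf_preimage_Iic {t : ℝ} (ht : t < 1) :
    P (cdf P ⁻¹' Iic t) = ENNReal.ofReal t := by
  set S := cdf P ⁻¹' Iic t
  obtain hS | hS := S.eq_empty_or_nonempty
  · suffices t ≤ 0 by simp [hS, ENNReal.ofReal_eq_zero.2 this]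
    by_contra! ht₀
    obtain ⟨x, hx⟩ := ((tendsto_cdf_atBot P).eventually_lt_const ht₀).exists
    exact hS.subset (show x ∈ S from hx.le)
  have hbdd : BddAbove S := by
    obtain ⟨b, hb⟩ := ((tendsto_cdf_atTop P).eventually_const_lt ht).exists_forall_of_atTop
    exact ⟨b, fun x hx => le_of_not_gt fun hbx => (hb x hbx.le).not_ge hx⟩
  obtain ⟨c, hc⟩ : ∃ c, S = Iic c :=
    ⟨sSup S, by
      rw [← lowerClosure_eq_Iic_csSup hS hbdd (isClosed_Iic.preimage (continuous_cdf P)),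
        ((isLowerSet_Iic t).preimage (monotone_cdf P)).lowerClosure]⟩
  -- the frontier of `{cdf P ≤ t}` lies in `{cdf P = t}`, and the frontier of `Iic c` is `{c}`
  have hct : cdf P c = t :=
    frontier_le_subset_eq (continuous_cdf P) continuous_const
      (show c ∈ frontier S by rw [hc, frontier_Iic]; rfl)
  rw [hc, ← ofReal_cdf, hct]

theorem map_cdf_eq_restrict_Icc : P.map (cdf P) = volume.restrict (Icc 0 1) := by
  refine Measure.ext_of_Iic _ _ fun t => ?_
  rw [Measure.map_apply (continuous_cdf P).measurable measurableSet_Iic,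
    Measure.restrict_apply measurableSet_Iic]
  rcases lt_or_ge t 1 with ht | ht
  · have hIcc : Iic t ∩ Icc 0 1 = Icc 0 t := by
      ext x
      simp only [mem_inter_iff, mem_Iic, mem_Icc]
      exact ⟨fun h => ⟨h.2.1, h.1⟩, fun h => ⟨h.2, h.1, h.2.trans ht.le⟩⟩
    rw [measure_cdf_preimage_Iic P ht, hIcc, Real.volume_Icc, sub_zero]
  · have hIcc : Iic t ∩ Icc 0 1 = Icc 0 1 := inter_eq_right.2 fun x hx => hx.2.trans ht
    have huniv : cdf P ⁻¹' Iic t = univ := eq_univ_of_forall fun x => (cdf_le_one P x).trans ht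
    rw [huniv, hIcc, Real.volume_Icc]
    simp

lemma measureReal_cdf_notMem_Ioo {a b : ℝ} (ha : 0 ≤ a) (hab : a ≤ b) (hb : b ≤ 1) :
    P.real {x | cdf P x ∉ Ioo a b} = 1 - (b - a) := by
  change P.real (cdf P ⁻¹' (Ioo a b)ᶜ) = _
  rw [← map_measureReal_apply (continuous_cdf P).measurable measurableSet_Ioo.compl,
    map_cdf_eq_restrict_Icc, measureReal_restrict_Icc_compl_Ioo ha hab hb]

end ProbabilityIntegralTransform

lemma two_mul_mul_one_sub_le_iff {u z : ℝ} :
    2 * u * (1 - u) ≤ z ↔ u ∉ Ioo ((1 - √(1 - 2 * z)) / 2) ((1 + √(1 - 2 * z)) / 2) := by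
  have key : 2 * u * (1 - u) ≤ z ↔ √(1 - 2 * z) ≤ |2 * u - 1| := by
    rw [Real.sqrt_le_left (abs_nonneg _), sq_abs]
    constructor <;> intro h <;> nlinarith
  rw [key, ← not_lt, abs_sub_lt_iff, mem_Ioo]
  constructor <;> intro h <;> contrapose! h <;> constructor <;> linarith [h.1, h.2]

lemma min_one_sub_le_iff {u z : ℝ} : min u (1 - u) ≤ z ↔ u ∉ Ioo z (1 - z) := by
  rw [min_le_iff, mem_Ioo, not_and_or, not_lt, not_lt]
  constructor <;> rintro (h | h) <;> first | exact Or.inl h | exact Or.inr (by linarith)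

lemma Real.sqrt_eq_self_iff {x : ℝ} : √x = x ↔ x = 0 ∨ x = 1 := by
  rw [le_antisymm_iff, Real.sqrt_le_self_iff, Real.le_sqrt_self_iff]
  constructor
  · rintro ⟨h | h, h'⟩
    exacts [Or.inl h, Or.inr (le_antisymm h' h)]
  · rintro (rfl | rfl) <;> norm_num

/-- For `X ~ P` atomless on `ℝ` with CDF `F`, the simplicial depth random variable
`2 F(X)(1 - F(X))` first-order stochastically dominates the halfspace depth random variable
`min (F X) (1 - F X)`: for every `z ∈ [0, 1/2]`, the CDF of the former at `z`, namely
`1 - √(1 - 2z)`, is at most the CDF of the latter at `z`, namely `2 z`; moreover equality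
`1 - √(1 - 2z) = 2z` holds exactly at `z = 0` and `z = 1/2`. -/
theorem simplicial_dominates_halfspace
    (P : Measure ℝ) [IsProbabilityMeasure P] [NullSingletonClass P]
    (F : ℝ → ℝ) (hF : ∀ x, F x = (P (Iic x)).toReal) :
    ∀ z ∈ Icc (0 : ℝ) (1 / 2),
      (P {x | 2 * F x * (1 - F x) ≤ z}).toReal = 1 - Real.sqrt (1 - 2 * z) ∧
      (P {x | min (F x) (1 - F x) ≤ z}).toReal = 2 * z ∧
      1 - Real.sqrt (1 - 2 * z) ≤ 2 * z ∧
      (1 - Real.sqrt (1 - 2 * z) = 2 * z ↔ z = 0 ∨ z = 1 / 2) := by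
  obtain rfl : F = cdf P := funext fun x => by rw [hF, cdf_eq_real, measureReal_def]
  rintro z ⟨hz₀, hz₁⟩
  have hs₀ : 0 ≤ √(1 - 2 * z) := Real.sqrt_nonneg _
  have hs₁ : √(1 - 2 * z) ≤ 1 := Real.sqrt_le_one.2 (by linarith)
  have hs : 1 - 2 * z ≤ √(1 - 2 * z) := Real.le_sqrt_self_iff.2 (by linarith)
  refine ⟨?_, ?_, by linarith, ?_⟩
  · simp_rw [← measureReal_def, two_mul_mul_one_sub_le_iff]
    rw [measureReal_cdf_notMem_Ioo P (by linarith) (by linarith) (by linarith)]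
    ring
  · simp_rw [← measureReal_def, min_one_sub_le_iff]
    rw [measureReal_cdf_notMem_Ioo P hz₀ (by linarith) (by linarith)]
    ring
  · rw [show 1 - √(1 - 2 * z) = 2 * z ↔ √(1 - 2 * z) = 1 - 2 * z by
        constructor <;> intro h <;> linarith,
      Real.sqrt_eq_self_iff]
    constructor <;> rintro (h | h) <;> first | (left; linarith) | (right; linarith)
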